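/- Let a > 0, σ > 0, σ̃ > 0, let μ be the Gaussian mixture distribution on ℝ with density μ(z) = (1/2)·N(z; −a, σ²) + (1/2)·N(z; a, σ²), let ν = N(0, σ̃²), and let T = F_ν⁻¹ ∘ F_μ where F_μ, F_ν are the respective CDFs. Then BiLip(T) ≥ (σ/σ̃)·exp(a²/(2σ²)). In particular BiLip(T) → ∞ as a → ∞. -/

import Mathlib

open MeasureTheory

noncomputable section

/-- Density of the one-dimensional Gaussian with mean `m` and variance `v`, evaluated at `x`. -/
def gpdf (m v x : ℝ) : ℝ := (Real.sqrt (2 * Real.pi * v))⁻¹ * Real.exp (-(x - m) ^ 2 / (2 * v))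

/-- Cumulative distribution function associated with a density `p`. -/
def cdfOf (p : ℝ → ℝ) (z : ℝ) : ℝ := ∫ t in Set.Iic z, p t

/-- The bi-Lipschitz constant of `f : ℝ → ℝ`: the infimum over `M ∈ [1, ∞]` such that
`M⁻¹ * |z - z'| ≤ |f z - f z'| ≤ M * |z - z'|` for all `z ≠ z'`. -/
def biLip (f : ℝ → ℝ) : ENNReal :=
  sInf {M : ENNReal | 1 ≤ M ∧ ∀ z z' : ℝ, z ≠ z' →
    M⁻¹ * ENNReal.ofReal |z - z'| ≤ ENNReal.ofReal |f z - f z'| ∧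
    ENNReal.ofReal |f z - f z'| ≤ M * ENNReal.ofReal |z - z'|}

lemma gpdf_eq_gaussian (m : ℝ) {v : ℝ} (hv : 0 < v) :
    gpdf m v = ProbabilityTheory.gaussianPDFReal m ⟨v, hv.le⟩ := rfl

lemma gpdf_pos (m : ℝ) {v : ℝ} (hv : 0 < v) (x : ℝ) : 0 < gpdf m v x := by
  unfold gpdf; positivity

lemma integrable_gpdf (m : ℝ) {v : ℝ} (hv : 0 < v) : Integrable (gpdf m v) := by
  rw [gpdf_eq_gaussian m hv]; exact ProbabilityTheory.integrable_gaussianPDFReal m _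

lemma integral_gpdf (m : ℝ) {v : ℝ} (hv : 0 < v) : ∫ x, gpdf m v x = 1 := by
  rw [gpdf_eq_gaussian m hv]
  exact ProbabilityTheory.integral_gaussianPDFReal_eq_one m (fun h => hv.ne' (congrArg NNReal.toReal h))

lemma continuous_gpdf (m v : ℝ) : Continuous (gpdf m v) := by
  unfold gpdf; fun_prop

lemma gpdf_neg (m v x : ℝ) : gpdf m v (-x) = gpdf (-m) v x := by
  unfold gpdf
  congr 2
  ring

lemma cdfOf_sub {q : ℝ → ℝ} (hq : Integrable q) (a b : ℝ) :
    cdfOf q b - cdfOf q a = ∫ x in a..b, q x :=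
  intervalIntegral.integral_Iic_sub_Iic hq.integrableOn hq.integrableOn

lemma cdfOf_strictMono {q : ℝ → ℝ} (hq : Integrable q) (hpos : ∀ x, 0 < q x) :
    StrictMono (cdfOf q) := by
  intro a b hab
  have h := intervalIntegral.intervalIntegral_pos_of_pos (f := q) hq.intervalIntegrable hpos hab
  have h2 := cdfOf_sub hq a b
  linarith

lemma cdfOf_continuous {q : ℝ → ℝ} (hq : Integrable q) : Continuous (cdfOf q) := by
  have h : ∀ z, cdfOf q z = cdfOf q 0 + ∫ x in (0:ℝ)..z, q x := by
    intro z
    have := cdfOf_sub hq 0 z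
    linarith
  rw [show cdfOf q = fun z => cdfOf q 0 + ∫ x in (0:ℝ)..z, q x from funext h]
  exact continuous_const.add
    (intervalIntegral.continuous_primitive (fun a b => hq.intervalIntegrable) 0)

lemma cdfOf_zero_of_even {q : ℝ → ℝ} (hq : Integrable q) (heven : ∀ x, q (-x) = q x)
    (hone : ∫ x, q x = 1) : cdfOf q 0 = 1 / 2 := by
  have h1 : cdfOf q 0 = ∫ x in Set.Ioi (0:ℝ), q x := by
    unfold cdfOf
    have := integral_comp_neg_Iic (0:ℝ) q
    simp only [heven, neg_zero] at this
    exact this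
  have h3 : (∫ x in Set.Iic (0:ℝ), q x) + ∫ x in Set.Ioi (0:ℝ), q x = ∫ x, q x :=
    intervalIntegral.integral_Iic_add_Ioi hq.integrableOn hq.integrableOn
  unfold cdfOf at *
  linarith

/-- For the Gaussian mixture `μ_a(z) = N(z; -a, σ²)/2 + N(z; a, σ²)/2` and
`ν = N(0, σ̃²)`, the transport map `T_a = F_ν⁻¹ ∘ F_{μ_a}` satisfies
`BiLip(T_a) ≥ (σ / σ̃) · exp(a² / (2σ²))` for every `a > 0`; in particular
`BiLip(T_a) → ∞` as `a → ∞`. -/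
theorem stmt2 (σ σt : ℝ) (hσ : 0 < σ) (hσt : 0 < σt)
    (p : ℝ → ℝ → ℝ)
    (hp : p = fun a z => gpdf (-a) (σ ^ 2) z / 2 + gpdf a (σ ^ 2) z / 2)
    (T : ℝ → ℝ → ℝ)
    (hT : T = fun a => Function.invFun (cdfOf (gpdf 0 (σt ^ 2))) ∘ cdfOf (p a)) :
    (∀ a : ℝ, 0 < a →
        ENNReal.ofReal (σ / σt * Real.exp (a ^ 2 / (2 * σ ^ 2))) ≤ biLip (T a)) ∧
      Filter.Tendsto (fun a => biLip (T a)) Filter.atTop (nhds ⊤) := by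
  have hv : (0:ℝ) < σ ^ 2 := by positivity
  have hvt : (0:ℝ) < σt ^ 2 := by positivity
  set q : ℝ → ℝ := gpdf 0 (σt ^ 2) with hqdef
  have hq_int : Integrable q := integrable_gpdf 0 hvt
  have hq_pos : ∀ x, 0 < q x := gpdf_pos 0 hvt
  have hq_one : ∫ x, q x = 1 := integral_gpdf 0 hvt
  have hq_even : ∀ x, q (-x) = q x := fun x => by
    rw [hqdef]; simpa using gpdf_neg 0 (σt ^ 2) x
  have hFq0 : cdfOf q 0 = 1 / 2 := cdfOf_zero_of_even hq_int hq_even hq_one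
  have hFq_mono : StrictMono (cdfOf q) := cdfOf_strictMono hq_int hq_pos
  have hFq_inj : Function.Injective (cdfOf q) := hFq_mono.injective
  have hFq_cont : Continuous (cdfOf q) := cdfOf_continuous hq_int
  set c1 : ℝ := (Real.sqrt (2 * Real.pi * σ ^ 2))⁻¹ with hc1def
  set q0 : ℝ := (Real.sqrt (2 * Real.pi * σt ^ 2))⁻¹ with hq0def
  have hc1 : 0 < c1 := by rw [hc1def]; positivity
  have hq0 : 0 < q0 := by rw [hq0def]; positivity
  have hsqrt : ∀ s : ℝ, 0 < s → Real.sqrt (2 * Real.pi * s ^ 2) = Real.sqrt (2 * Real.pi) * s := by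
    intro s hs
    rw [Real.sqrt_mul (by positivity), Real.sqrt_sq hs.le]
  have hratio : q0 / c1 = σ / σt := by
    rw [hq0def, hc1def, hsqrt σ hσ, hsqrt σt hσt]
    have h2π : (0:ℝ) < Real.sqrt (2 * Real.pi) := by positivity
    field_simp
  have key : ∀ a : ℝ, 0 < a →
      ENNReal.ofReal (σ / σt * Real.exp (a ^ 2 / (2 * σ ^ 2))) ≤ biLip (T a) := by
    intro a ha
    have hpa_int : Integrable (p a) := by
      rw [hp]
      exact ((integrable_gpdf (-a) hv).div_const 2).add ((integrable_gpdf a hv).div_const 2)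
    have hpa_pos : ∀ x, 0 < p a x := by
      intro x; rw [hp]
      have h1 := gpdf_pos (-a) hv x
      have h2 := gpdf_pos a hv x
      simp only
      linarith
    have hpa_one : ∫ x, p a x = 1 := by
      rw [hp]
      simp only
      rw [integral_add ((integrable_gpdf (-a) hv).div_const 2) ((integrable_gpdf a hv).div_const 2),
        integral_div, integral_div, integral_gpdf (-a) hv, integral_gpdf a hv]
      norm_num
    have hpa_even : ∀ x, p a (-x) = p a x := by
      intro x; rw [hp]
      simp only [gpdf_neg, neg_neg]
      ring
    have hFp0 : cdfOf (p a) 0 = 1 / 2 := cdfOf_zero_of_even hpa_int hpa_even hpa_one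
    have hFp_mono : StrictMono (cdfOf (p a)) := cdfOf_strictMono hpa_int hpa_pos
    have hT0 : T a 0 = 0 := by
      rw [hT]
      simp only [Function.comp_apply]
      rw [hFp0, ← hFq0]
      exact Function.leftInverse_invFun hFq_inj 0
    refine le_sInf ?_
    rintro M ⟨hM1, hM⟩
    rcases eq_or_ne M ⊤ with hMtop | hMtop
    · simp [hMtop]
    set m := M.toReal with hmdef
    have hMm : M = ENNReal.ofReal m := (ENNReal.ofReal_toReal hMtop).symm
    have hm1 : (1:ℝ) ≤ m := by
      have := ENNReal.toReal_mono hMtop hM1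
      simpa using this
    rw [hMm]
    apply ENNReal.ofReal_le_ofReal
    refine le_of_forall_lt_imp_le_of_dense ?_
    intro r hr
    rcases le_or_gt r 0 with hr0 | hr0
    · linarith
    have hE : (0:ℝ) < Real.exp (a ^ 2 / (2 * σ ^ 2)) := Real.exp_pos _
    have h5 : r * c1 < q0 * Real.exp (a ^ 2 / (2 * σ ^ 2)) := by
      rw [← hratio] at hr
      have h := mul_lt_mul_of_pos_right hr hc1
      have he : q0 / c1 * Real.exp (a ^ 2 / (2 * σ ^ 2)) * c1 =
          q0 * Real.exp (a ^ 2 / (2 * σ ^ 2)) := by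
        field_simp
      rw [he] at h
      exact h
    have hcond : c1 * Real.exp (-a ^ 2 / (2 * σ ^ 2)) < q0 / r := by
      rw [neg_div, Real.exp_neg, lt_div_iff₀ hr0]
      have h6 := mul_lt_mul_of_pos_right h5 (inv_pos.mpr hE)
      have h7 : q0 * Real.exp (a ^ 2 / (2 * σ ^ 2)) * (Real.exp (a ^ 2 / (2 * σ ^ 2)))⁻¹ = q0 := by
        field_simp
      rw [h7] at h6
      linarith
    set g : ℝ → ℝ := fun t =>
      q0 * Real.exp (-(t / r) ^ 2 / (2 * σt ^ 2)) / r - c1 * Real.exp (-(a - t) ^ 2 / (2 * σ ^ 2))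
      with hgdef
    have hg_cont : Continuous g := by
      rw [hgdef]; fun_prop
    have hg0 : 0 < g 0 := by
      rw [hgdef]
      simp only
      norm_num
      exact hcond
    obtain ⟨d, hd_pos, hd⟩ := Metric.continuousAt_iff.mp (hg_cont.continuousAt (x := 0)) (g 0) hg0
    set ε : ℝ := min (d / 2) a with hεdef
    have hε_pos : 0 < ε := lt_min (by linarith) ha
    have hεa : ε ≤ a := min_le_right _ _
    have hgε : 0 < g ε := by
      have hdist : dist ε 0 < d := by
        rw [Real.dist_eq, sub_zero, abs_of_pos hε_pos]
        calc ε ≤ d / 2 := min_le_left _ _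
          _ < d := by linarith
      have := hd hdist
      rw [Real.dist_eq] at this
      have := abs_lt.mp this
      linarith [this.1]
    set δ : ℝ := ε / r with hδdef
    have hδ_pos : 0 < δ := div_pos hε_pos hr0
    -- Claim A : upper bound for cdfOf (p a) ε
    have hCA : cdfOf (p a) ε ≤ 1 / 2 + ε * (c1 * Real.exp (-(a - ε) ^ 2 / (2 * σ ^ 2))) := by
      have hsubA := cdfOf_sub hpa_int 0 ε
      rw [hFp0] at hsubA
      have hmono : (∫ x in (0:ℝ)..ε, p a x) ≤
          ∫ _x in (0:ℝ)..ε, c1 * Real.exp (-(a - ε) ^ 2 / (2 * σ ^ 2)) := by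
        apply intervalIntegral.integral_mono_on hε_pos.le hpa_int.intervalIntegrable
          intervalIntegrable_const
        intro x hx
        obtain ⟨hx0, hxε⟩ := hx
        have hbound : ∀ mm : ℝ, (a - ε) ^ 2 ≤ (x - mm) ^ 2 →
            gpdf mm (σ ^ 2) x ≤ c1 * Real.exp (-(a - ε) ^ 2 / (2 * σ ^ 2)) := by
          intro mm harg
          unfold gpdf
          rw [← hc1def]
          apply mul_le_mul_of_nonneg_left _ hc1.le
          apply Real.exp_le_exp.mpr
          rw [div_eq_mul_inv, div_eq_mul_inv]
          exact mul_le_mul_of_nonneg_right (neg_le_neg harg) (by positivity)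
        have e1 : gpdf (-a) (σ ^ 2) x ≤ c1 * Real.exp (-(a - ε) ^ 2 / (2 * σ ^ 2)) := by
          apply hbound
          have h1 : a - ε ≤ x - -a := by linarith
          exact pow_le_pow_left₀ (by linarith) h1 2
        have e2 : gpdf a (σ ^ 2) x ≤ c1 * Real.exp (-(a - ε) ^ 2 / (2 * σ ^ 2)) := by
          apply hbound
          have h1 : a - ε ≤ a - x := by linarith
          have h2 : (a - ε) ^ 2 ≤ (a - x) ^ 2 := pow_le_pow_left₀ (by linarith) h1 2
          have h3 : (a - x) ^ 2 = (x - a) ^ 2 := by ring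
          linarith
        rw [hp]
        simp only
        linarith
      rw [intervalIntegral.integral_const] at hmono
      simp only [smul_eq_mul, sub_zero] at hmono
      linarith
    -- Claim B : lower bound for cdfOf q δ
    have hCB : 1 / 2 + δ * (q0 * Real.exp (-δ ^ 2 / (2 * σt ^ 2))) ≤ cdfOf q δ := by
      have hsubB := cdfOf_sub hq_int 0 δ
      rw [hFq0] at hsubB
      have hmono : (∫ _x in (0:ℝ)..δ, q0 * Real.exp (-δ ^ 2 / (2 * σt ^ 2))) ≤
          ∫ x in (0:ℝ)..δ, q x := by
        apply intervalIntegral.integral_mono_on hδ_pos.le intervalIntegrable_const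
          hq_int.intervalIntegrable
        intro x hx
        obtain ⟨hx0, hxδ⟩ := hx
        rw [hqdef]
        unfold gpdf
        rw [← hq0def]
        apply mul_le_mul_of_nonneg_left _ hq0.le
        apply Real.exp_le_exp.mpr
        rw [div_eq_mul_inv, div_eq_mul_inv]
        apply mul_le_mul_of_nonneg_right _ (by positivity)
        apply neg_le_neg
        rw [sub_zero]
        exact pow_le_pow_left₀ hx0 hxδ 2
      rw [intervalIntegral.integral_const] at hmono
      simp only [smul_eq_mul, sub_zero] at hmono
      linarith
    -- chain the estimates
    have hchain : cdfOf (p a) ε ≤ cdfOf q δ := by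
      have hgε' : c1 * Real.exp (-(a - ε) ^ 2 / (2 * σ ^ 2)) <
          q0 * Real.exp (-(ε / r) ^ 2 / (2 * σt ^ 2)) / r := by
        rw [hgdef] at hgε
        simp only at hgε
        linarith
      have hmul := mul_lt_mul_of_pos_left hgε' hε_pos
      have heq : ε * (q0 * Real.exp (-(ε / r) ^ 2 / (2 * σt ^ 2)) / r) =
          δ * (q0 * Real.exp (-δ ^ 2 / (2 * σt ^ 2))) := by
        rw [hδdef]; ring
      rw [heq] at hmul
      linarith
    have hlo : cdfOf q 0 ≤ cdfOf (p a) ε := by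
      rw [hFq0, ← hFp0]
      exact hFp_mono.monotone hε_pos.le
    obtain ⟨y, hy_mem, hy⟩ := intermediate_value_Icc hδ_pos.le hFq_cont.continuousOn
      (Set.mem_Icc.mpr ⟨hlo, hchain⟩)
    have hTε : T a ε = y := by
      rw [hT]
      simp only [Function.comp_apply]
      rw [← hy]
      exact Function.leftInverse_invFun hFq_inj y
    obtain ⟨hlow, -⟩ := hM ε 0 hε_pos.ne'
    rw [hT0, hTε, sub_zero, sub_zero, abs_of_pos hε_pos, abs_of_nonneg hy_mem.1] at hlow
    have hM0 : M ≠ 0 := by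
      intro h
      rw [h] at hM1
      simp at hM1
    have h2 : ENNReal.ofReal ε ≤ M * ENNReal.ofReal y := by
      calc ENNReal.ofReal ε = M * (M⁻¹ * ENNReal.ofReal ε) := by
            rw [← mul_assoc, ENNReal.mul_inv_cancel hM0 hMtop, one_mul]
        _ ≤ M * ENNReal.ofReal y := mul_le_mul_right hlow M
    rw [hMm, ← ENNReal.ofReal_mul (by linarith)] at h2
    have h3 : ε ≤ m * y :=
      (ENNReal.ofReal_le_ofReal_iff (mul_nonneg (by linarith) hy_mem.1)).mp h2
    have h4 : ε ≤ m * δ := by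
      have := mul_le_mul_of_nonneg_left hy_mem.2 (by linarith : (0:ℝ) ≤ m)
      linarith
    rw [hδdef] at h4
    have h5 : ε * r ≤ m * ε := by
      have h6 := mul_le_mul_of_nonneg_right h4 hr0.le
      have h7 : m * (ε / r) * r = m * ε := by field_simp
      rw [h7] at h6
      exact h6
    have h8 : r * ε ≤ m * ε := by linarith
    exact le_of_mul_le_mul_right h8 hε_pos
  refine ⟨key, ?_⟩
  have h1 : Filter.Tendsto (fun a : ℝ => σ / σt * Real.exp (a ^ 2 / (2 * σ ^ 2)))
      Filter.atTop Filter.atTop := by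
    apply Filter.Tendsto.const_mul_atTop (by positivity : (0:ℝ) < σ / σt)
    apply Real.tendsto_exp_atTop.comp
    exact Filter.Tendsto.atTop_div_const (by positivity) (Filter.tendsto_pow_atTop two_ne_zero)
  have h2 := ENNReal.tendsto_ofReal_atTop.comp h1
  have hle : (ENNReal.ofReal ∘ fun a : ℝ => σ / σt * Real.exp (a ^ 2 / (2 * σ ^ 2)))
      ≤ᶠ[Filter.atTop] fun a => biLip (T a) := by
    filter_upwards [Filter.eventually_gt_atTop 0] with a ha
    exact key a ha
  exact tendsto_nhds_top_mono h2 hle
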